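/- Let A_• be a connective (non-negatively graded) chain complex in an abelian category and let DK(A)_n = ⊕_{η:[n]↠[p]} A_p be the n-th term of the Dold–Kan simplicial object, with structure maps defined via epi-mono factorization (where the summand map corresponding to ρ = δ^p_p: [p−1] ↪ [p] is (−1)^p ∂_p, the one corresponding to ρ = id is the identity, and all others are 0). Let π_n : DK(A)_n → A_n denote the projection onto the summand indexed by η = id_{[n]}. Then for every ā ∈ DK(A)_n, d(π_n(ā)) = Σ_{j=0}^{n} (−1)^j π_{n−1}(d_j(ā)), where d is the differential of A_• and d_j are the face maps of DK(A). -/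

import Mathlib

/-!
The summand of `DK(A)_{n+1}` indexed by `η : [n+1] ↠ [p]` reaches `π_n ∘ d_j` only when
`η ∘ δ_j` is injective, which needs `p ≥ n`; so it suffices to compare both sides on the
summands with `p = n + 1` and `p = n`. For `η = id` every `δ_j` is injective and only
`δ_{n+1}` misses the top vertex, so the right-hand side is `(-1)^{n+1} (-1)^{n+1} ∂ = ∂`.
For `p = n` we have `η = σ_i`, and `σ_i ∘ δ_j` is injective (hence the identity) exactly for
`j ∈ {i, i+1}`, so the two surviving terms `(-1)^i` and `(-1)^{i+1}` cancel, as does the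
left-hand side because `π_{n+1}` kills every summand but `id`.
-/

open CategoryTheory CategoryTheory.Limits

noncomputable section

universe v u

variable {C : Type u} [Category.{v} C] [Abelian C]

instance : CategoryTheory.Limits.HasFiniteBiproducts C :=
  CategoryTheory.Limits.HasFiniteBiproducts.of_hasFiniteProducts

/-- The index set of the Dold–Kan direct sum in simplicial degree `n`:
surjective monotone maps `η : [n] ↠ [p]`. -/
def SurjIdx (n : ℕ) : Type :=
  Σ p : Fin (n + 1), {θ : Fin (n + 1) →o Fin (p.val + 1) // Function.Surjective θ}

instance (n : ℕ) : Finite (SurjIdx n) := by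
  have : ∀ p : Fin (n + 1),
      Finite {θ : Fin (n + 1) →o Fin (p.val + 1) // Function.Surjective θ} := by
    intro p
    have : Finite (Fin (n + 1) →o Fin (p.val + 1)) :=
      Finite.of_injective (fun θ => (θ : Fin (n + 1) → Fin (p.val + 1)))
        (fun a b h => OrderHom.ext _ _ h)
    infer_instance
  exact Finite.instSigma

/-- The `n`-th term of the Dold–Kan simplicial object: `⊕_{η : [n] ↠ [p]} A_p`. -/
def DKobj (A : ChainComplex C ℕ) (n : ℕ) : C :=
  ⨁ (fun s : SurjIdx n => A.X s.1.val)

/-- The index of the identity surjection `[n] ↠ [n]`. -/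
def idIdx (n : ℕ) : SurjIdx n :=
  ⟨⟨n, by omega⟩, ⟨OrderHom.id, fun b => ⟨b, rfl⟩⟩⟩

/-- The projection `π_n : DK(A)_n → A_n` onto the summand indexed by `id_{[n]}`. -/
def DKπ (A : ChainComplex C ℕ) (n : ℕ) : DKobj A n ⟶ A.X n :=
  biproduct.π (fun s : SurjIdx n => A.X s.1.val) (idIdx n)

/-- The image of `η ∘ θ` in `[p]`. -/
def compImg {m n : ℕ} (θ : Fin (m + 1) →o Fin (n + 1)) (s : SurjIdx n) :
    Finset (Fin (s.1.val + 1)) := by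
  classical
  exact Finset.image (fun i => s.2.1 (θ i)) Finset.univ

lemma compImg_card_pos {m n : ℕ} (θ : Fin (m + 1) →o Fin (n + 1)) (s : SurjIdx n) :
    0 < (compImg θ s).card := by
  classical
  exact Finset.card_pos.mpr ⟨_, Finset.mem_image_of_mem _ (Finset.mem_univ 0)⟩

lemma compImg_card_le {m n : ℕ} (θ : Fin (m + 1) →o Fin (n + 1)) (s : SurjIdx n) :
    (compImg θ s).card ≤ m + 1 := by
  classical
  calc (compImg θ s).card ≤ (Finset.univ : Finset (Fin (m + 1))).card :=
        Finset.card_image_le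
    _ = m + 1 := by simp

/-- The epi part `ε : [m] ↠ [q]` of the epi-mono factorisation of `η ∘ θ`. -/
def factorIdx {m n : ℕ} (θ : Fin (m + 1) →o Fin (n + 1)) (s : SurjIdx n) : SurjIdx m := by
  classical
  have hcard : (compImg θ s).card = ((compImg θ s).card - 1) + 1 := by
    have := compImg_card_pos θ s
    omega
  refine ⟨⟨(compImg θ s).card - 1, by have := compImg_card_le θ s; omega⟩,
    ⟨⟨fun i => ((compImg θ s).orderIsoOfFin hcard).symm
        ⟨s.2.1 (θ i), Finset.mem_image_of_mem _ (Finset.mem_univ i)⟩, ?_⟩, ?_⟩⟩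
  · intro a b hab
    exact (((compImg θ s).orderIsoOfFin hcard).symm).monotone
      (Subtype.mk_le_mk.mpr (s.2.1.monotone (θ.monotone hab)))
  · intro b
    obtain ⟨i, -, hi⟩ := Finset.mem_image.mp ((compImg θ s).orderIsoOfFin hcard b).2
    refine ⟨i, ?_⟩
    show ((compImg θ s).orderIsoOfFin hcard).symm _ = b
    have : (⟨s.2.1 (θ i), Finset.mem_image_of_mem _ (Finset.mem_univ i)⟩ :
        {x // x ∈ compImg θ s}) = (compImg θ s).orderIsoOfFin hcard b :=
      Subtype.ext hi
    rw [this, OrderIso.symm_apply_apply]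

/-- The coefficient morphism attached to the epi-mono factorisation
`η ∘ θ = ρ ∘ ε`: the identity if `ρ = id`, `(-1)^p ∂_p` if `ρ = δ^p_p`, and `0`
otherwise. -/
def mapCoeff (A : ChainComplex C ℕ) {m n : ℕ} (θ : Fin (m + 1) →o Fin (n + 1))
    (s : SurjIdx n) : A.X s.1.val ⟶ A.X ((factorIdx θ s).1.val) := by
  classical
  exact if hq : (factorIdx θ s).1.val = s.1.val then eqToHom (congrArg A.X hq.symm)
  else if _h : ((factorIdx θ s).1.val + 1 = s.1.val
      ∧ (Fin.last s.1.val) ∉ compImg θ s) then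
    ((-1 : ℤ) ^ (s.1.val : ℕ)) • A.d s.1.val ((factorIdx θ s).1.val)
  else 0

/-- The Dold–Kan structure map attached to a monotone map `θ : [m] → [n]`. -/
def DKmap (A : ChainComplex C ℕ) {m n : ℕ} (θ : Fin (m + 1) →o Fin (n + 1)) :
    DKobj A n ⟶ DKobj A m := by
  classical
  exact biproduct.matrix (fun s t =>
    if h : t = factorIdx θ s then
      mapCoeff A θ s ≫ eqToHom (congrArg (fun u : SurjIdx m => A.X u.1.val) h.symm)
    else 0)

/-- The `j`-th coface `δ_j : [n] → [n+1]` as a monotone map. -/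
def δOH (n : ℕ) (j : Fin (n + 2)) : Fin (n + 1) →o Fin (n + 2) :=
  ⟨j.succAbove, (Fin.strictMono_succAbove j).monotone⟩

lemma Fin.orderHom_eq_id_of_surjective {n : ℕ} (η : Fin (n + 1) →o Fin (n + 1))
    (hη : Function.Surjective η) : η = OrderHom.id :=
  have : Epi (SimplexCategory.mkHom η) := SimplexCategory.epi_iff_surjective.mpr hη
  congrArg SimplexCategory.Hom.toOrderHom (SimplexCategory.eq_id_of_epi (SimplexCategory.mkHom η))

lemma Fin.exists_orderHom_eq_predAbove_of_surjective {n : ℕ} (η : Fin (n + 2) →o Fin (n + 1))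
    (hη : Function.Surjective η) : ∃ i : Fin (n + 1), ∀ x, η x = i.predAbove x := by
  have : Epi (SimplexCategory.mkHom η) := SimplexCategory.epi_iff_surjective.mpr hη
  obtain ⟨i, hi⟩ := SimplexCategory.eq_σ_of_epi (SimplexCategory.mkHom η)
  exact ⟨i, fun x => congrArg (fun f => f.toOrderHom x) hi⟩

lemma Fin.injective_predAbove_comp_succAbove_iff {n : ℕ} (i : Fin (n + 1)) (j : Fin (n + 2)) :
    Function.Injective (fun x => i.predAbove (j.succAbove x)) ↔ j = i.castSucc ∨ j = i.succ := by
  constructor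
  · intro hinj
    by_contra! hj
    obtain ⟨a, ha⟩ := Fin.exists_succAbove_eq_iff.mpr hj.1.symm
    obtain ⟨b, hb⟩ := Fin.exists_succAbove_eq_iff.mpr hj.2.symm
    have hab : a = b := hinj (by simp only [ha, hb, Fin.predAbove_castSucc_self,
      Fin.predAbove_succ_self])
    exact Fin.castSucc_lt_succ.ne (ha.symm.trans (hab ▸ hb))
  · rintro (rfl | rfl)
    · exact Function.LeftInverse.injective (g := id) (Fin.predAbove_succAbove i)
    · exact Function.LeftInverse.injective (g := id)
        (fun x => congrArg (fun f => f.toOrderHom x) (SimplexCategory.δ_comp_σ_succ (i := i)))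

lemma SurjIdx.eq_idIdx {n : ℕ} (s : SurjIdx n) (hs : s.1.val = n) : s = idIdx n := by
  obtain ⟨⟨p, hp⟩, η, hη⟩ := s
  obtain rfl : p = n := hs
  obtain rfl := Fin.orderHom_eq_id_of_surjective η hη
  rfl

lemma factorIdx_eq_of_comp_eq {m n : ℕ} (θ : Fin (m + 1) →o Fin (n + 1)) (s : SurjIdx n)
    (q : ℕ) (hq : q < m + 1) (ε : Fin (m + 1) →o Fin (q + 1)) (hε : Function.Surjective ε)
    (ρ : Fin (q + 1) → Fin (s.1.val + 1)) (hρ : StrictMono ρ)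
    (hcomp : ∀ i, ρ (ε i) = s.2.1 (θ i)) :
    factorIdx θ s = ⟨⟨q, hq⟩, ⟨ε, hε⟩⟩ := by
  have himg : compImg θ s = Finset.image ρ Finset.univ := by
    ext x
    simp only [compImg, Finset.mem_image, Finset.mem_univ, true_and]
    constructor
    · rintro ⟨i, rfl⟩
      exact ⟨ε i, hcomp i⟩
    · rintro ⟨y, rfl⟩
      obtain ⟨i, rfl⟩ := hε y
      exact ⟨i, (hcomp i).symm⟩
  have hcard : (compImg θ s).card = q + 1 := by
    rw [himg, Finset.card_image_of_injective _ hρ.injective, Finset.card_univ, Fintype.card_fin]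
  have hρeq : ρ = (compImg θ s).orderEmbOfFin hcard :=
    Finset.orderEmbOfFin_unique hcard
      (fun x => himg ▸ Finset.mem_image_of_mem _ (Finset.mem_univ x)) hρ
  obtain rfl : q = (compImg θ s).card - 1 := by omega
  have hε' : ∀ i, ((compImg θ s).orderIsoOfFin (by omega)).symm
      ⟨s.2.1 (θ i), Finset.mem_image_of_mem _ (Finset.mem_univ i)⟩ = ε i := by
    intro i
    rw [OrderIso.symm_apply_eq]
    exact Subtype.ext ((congrFun hρeq (ε i)).symm.trans (hcomp i)).symm
  exact congrArg (fun g => (⟨_, g⟩ : SurjIdx m)) (Subtype.ext (OrderHom.ext _ _ (funext hε')))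

lemma factorIdx_eq_idIdx_iff {m n : ℕ} (θ : Fin (m + 1) →o Fin (n + 1)) (s : SurjIdx n) :
    factorIdx θ s = idIdx m ↔ Function.Injective (fun i => s.2.1 (θ i)) := by
  constructor
  · intro h
    have hq : (compImg θ s).card - 1 = m := congrArg (fun u : SurjIdx m => u.1.val) h
    have hcard : (compImg θ s).card = (Finset.univ : Finset (Fin (m + 1))).card := by
      have := compImg_card_pos θ s
      simp only [Finset.card_univ, Fintype.card_fin]
      omega
    rw [← Set.injOn_univ, ← Finset.coe_univ]
    exact Finset.card_image_iff.mp hcard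
  · intro hinj
    exact factorIdx_eq_of_comp_eq θ s m (by omega) OrderHom.id Function.surjective_id _
      ((s.2.1.monotone.comp θ.monotone).strictMono_of_injective hinj) (fun _ => rfl)

section

variable (A : ChainComplex C ℕ)

lemma ι_DKmap_DKπ_of_factorIdx_eq {m n : ℕ} (θ : Fin (m + 1) →o Fin (n + 1)) (s : SurjIdx n)
    (h : factorIdx θ s = idIdx m) :
    biproduct.ι (fun t : SurjIdx n => A.X t.1.val) s ≫ DKmap A θ ≫ DKπ A m
      = mapCoeff A θ s ≫ eqToHom (congrArg (fun u : SurjIdx m => A.X u.1.val) h) := by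
  -- `SurjIdx` is a plain `def`, so `Sigma.fst` of its terms only typechecks after unfolding it,
  -- which `rw` does not do; hence `erw` here and below.
  erw [DKmap, DKπ, ← Category.assoc, biproduct.ι_matrix, biproduct.lift_π]
  exact dif_pos h.symm

lemma ι_DKmap_DKπ_of_not_injective {m n : ℕ} (θ : Fin (m + 1) →o Fin (n + 1)) (s : SurjIdx n)
    (h : ¬ Function.Injective (fun i => s.2.1 (θ i))) :
    biproduct.ι (fun t : SurjIdx n => A.X t.1.val) s ≫ DKmap A θ ≫ DKπ A m = 0 := by
  erw [DKmap, DKπ, ← Category.assoc, biproduct.ι_matrix, biproduct.lift_π]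
  exact dif_neg fun hs => h ((factorIdx_eq_idIdx_iff θ s).mp hs.symm)

lemma ι_DKmap_DKπ_of_injective {m n : ℕ} (θ : Fin (m + 1) →o Fin (n + 1)) (hm : m < n + 1)
    (η : Fin (n + 1) →o Fin (m + 1)) (hη : Function.Surjective η)
    (h : Function.Injective (fun i => η (θ i))) :
    biproduct.ι (fun t : SurjIdx n => A.X t.1.val) ⟨⟨m, hm⟩, η, hη⟩ ≫ DKmap A θ ≫ DKπ A m
      = 𝟙 (A.X m) := by
  have hfac := (factorIdx_eq_idIdx_iff θ ⟨⟨m, hm⟩, η, hη⟩).mpr h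
  rw [ι_DKmap_DKπ_of_factorIdx_eq A θ _ hfac]
  have hq : (factorIdx θ ⟨⟨m, hm⟩, η, hη⟩).1.val = m :=
    congrArg (fun u : SurjIdx m => u.1.val) hfac
  unfold mapCoeff
  rw [dif_pos hq, eqToHom_trans]
  exact eqToHom_refl _ _

lemma ι_idIdx_DKmap_δOH_DKπ (n : ℕ) (j : Fin (n + 2)) :
    biproduct.ι (fun t : SurjIdx (n + 1) => A.X t.1.val) (idIdx (n + 1)) ≫ DKmap A (δOH n j)
        ≫ DKπ A n
      = if j = Fin.last (n + 1) then ((-1 : ℤ) ^ (n + 1)) • A.d (n + 1) n else 0 := by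
  have hfac : factorIdx (δOH n j) (idIdx (n + 1)) = idIdx n :=
    (factorIdx_eq_idIdx_iff _ _).mpr (Fin.succAbove_right_injective (p := j))
  have hq : (factorIdx (δOH n j) (idIdx (n + 1))).1.val = n :=
    congrArg (fun u : SurjIdx n => u.1.val) hfac
  have hlast : Fin.last (n + 1) ∈ compImg (δOH n j) (idIdx (n + 1)) ↔ j ≠ Fin.last (n + 1) := by
    refine Finset.mem_image.trans ?_
    simp only [Finset.mem_univ, true_and, ne_comm (a := j)]
    exact Fin.exists_succAbove_eq_iff
  have hne : (factorIdx (δOH n j) (idIdx (n + 1))).1.val ≠ (idIdx (n + 1)).1.val := by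
    rw [hq]
    exact Nat.ne_add_one n
  rw [ι_DKmap_DKπ_of_factorIdx_eq A _ _ hfac]
  unfold mapCoeff
  rw [dif_neg hne]
  split_ifs with hj hj'
  · rw [Preadditive.zsmul_comp]
    exact congrArg _ (A.d_comp_XIsoOfEq_hom hq _)
  · exact absurd (hlast.mpr hj') hj.2
  · exact absurd ⟨by rw [hq]; rfl, fun h => hlast.mp h ‹_›⟩ hj
  · exact zero_comp

lemma ι_DKπ_comp_of_ne {n : ℕ} (s : SurjIdx n) (hs : s ≠ idIdx n) {X : C} (f : A.X n ⟶ X) :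
    biproduct.ι (fun t : SurjIdx n => A.X t.1.val) s ≫ DKπ A n ≫ f = 0 := by
  erw [DKπ, biproduct.ι_π_ne_assoc _ hs, zero_comp]

lemma ι_idIdx_DKπ_comp (n : ℕ) {X : C} (f : A.X n ⟶ X) :
    biproduct.ι (fun t : SurjIdx n => A.X t.1.val) (idIdx n) ≫ DKπ A n ≫ f = f := by
  erw [DKπ, biproduct.ι_π_self_assoc]

lemma sum_ι_DKmap_δOH_DKπ_of_lt {n : ℕ} (s : SurjIdx (n + 1)) (hs : s.1.val < n) :
    ∑ j : Fin (n + 2), ((-1 : ℤ) ^ (j : ℕ)) •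
      (biproduct.ι (fun t : SurjIdx (n + 1) => A.X t.1.val) s ≫ DKmap A (δOH n j) ≫ DKπ A n)
      = 0 :=
  Finset.sum_eq_zero fun j _ => by
    rw [ι_DKmap_DKπ_of_not_injective A _ s fun h => ?_, smul_zero]
    have := Fintype.card_le_of_injective _ h
    simp only [Fintype.card_fin] at this
    omega

lemma sum_ι_DKmap_δOH_DKπ_of_codim_one {n : ℕ} (hn : n < n + 2)
    (η : Fin (n + 2) →o Fin (n + 1)) (hη : Function.Surjective η) :
    ∑ j : Fin (n + 2), ((-1 : ℤ) ^ (j : ℕ)) •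
      (biproduct.ι (fun t : SurjIdx (n + 1) => A.X t.1.val) ⟨⟨n, hn⟩, η, hη⟩
        ≫ DKmap A (δOH n j) ≫ DKπ A n) = 0 := by
  obtain ⟨i, hi⟩ := Fin.exists_orderHom_eq_predAbove_of_surjective η hη
  have hentry : ∀ j : Fin (n + 2),
      biproduct.ι (fun t : SurjIdx (n + 1) => A.X t.1.val) ⟨⟨n, hn⟩, η, hη⟩
        ≫ DKmap A (δOH n j) ≫ DKπ A n
        = if j = i.castSucc ∨ j = i.succ then 𝟙 (A.X n) else 0 := by
    intro j
    have hinj : Function.Injective (fun x => η (δOH n j x)) ↔ j = i.castSucc ∨ j = i.succ := by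
      simp only [hi]
      exact Fin.injective_predAbove_comp_succAbove_iff i j
    split_ifs with hj
    · exact ι_DKmap_DKπ_of_injective A _ _ η hη (hinj.mpr hj)
    · exact ι_DKmap_DKπ_of_not_injective A _ _ (hinj.not.mpr hj)
  rw [Fintype.sum_eq_add i.castSucc i.succ Fin.castSucc_lt_succ.ne fun j hj => by
    rw [hentry, if_neg (by tauto), smul_zero]]
  rw [hentry, hentry, if_pos (Or.inl rfl), if_pos (Or.inr rfl), Fin.val_castSucc, Fin.val_succ,
    pow_succ, ← add_smul, mul_neg_one, add_neg_cancel, zero_smul]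

lemma sum_ι_idIdx_DKmap_δOH_DKπ (n : ℕ) :
    ∑ j : Fin (n + 2), ((-1 : ℤ) ^ (j : ℕ)) •
      (biproduct.ι (fun t : SurjIdx (n + 1) => A.X t.1.val) (idIdx (n + 1))
        ≫ DKmap A (δOH n j) ≫ DKπ A n) = A.d (n + 1) n := by
  rw [Fintype.sum_eq_single (Fin.last (n + 1)) fun j hj => by
    rw [ι_idIdx_DKmap_δOH_DKπ, if_neg hj]
    exact smul_zero ((-1 : ℤ) ^ (j : ℕ))]
  rw [ι_idIdx_DKmap_δOH_DKπ, if_pos rfl, Fin.val_last]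
  show ((-1 : ℤ) ^ (n + 1)) • ((-1 : ℤ) ^ (n + 1)) • A.d (n + 1) n = A.d (n + 1) n
  rw [smul_smul, ← pow_add, Even.neg_one_pow ⟨n + 1, rfl⟩, one_smul]

end

/-- **Statement 8.**  For every connective chain complex `A` in an abelian category
and every `n`, the differential of the top Dold–Kan component satisfies
`d ∘ π_{n+1} = ∑_{j=0}^{n+1} (-1)^j π_n ∘ (d_j)`, where `d_j = DK(δ_j)` are the face
maps of the Dold–Kan simplicial object `DK(A)`. -/
theorem dk_top_component_boundary (A : ChainComplex C ℕ) (n : ℕ) :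
    DKπ A (n + 1) ≫ A.d (n + 1) n
      = ∑ j : Fin (n + 2),
          ((-1 : ℤ) ^ (j : ℕ)) • (DKmap A (δOH n j) ≫ DKπ A n) := by
  refine biproduct.hom_ext' _ _ fun s => ?_
  erw [Preadditive.comp_sum, Finset.sum_congr rfl fun j _ => Preadditive.comp_zsmul _ _ _]
  by_cases hs : s = idIdx (n + 1)
  · subst hs
    exact (ι_idIdx_DKπ_comp A _ _).trans (sum_ι_idIdx_DKmap_δOH_DKπ A n).symm
  refine (ι_DKπ_comp_of_ne A s hs _).trans ?_
  obtain ⟨⟨p, hp⟩, η, hη⟩ := s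
  have hpn : p ≤ n := by
    by_contra! h
    exact hs (SurjIdx.eq_idIdx _ (by simp only; omega))
  rcases hpn.lt_or_eq with hpn | rfl
  · exact (sum_ι_DKmap_δOH_DKπ_of_lt A _ hpn).symm
  · exact (sum_ι_DKmap_δOH_DKπ_of_codim_one A hp η hη).symm

end
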